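/- Let X be a pre-Riesz space and consider the set of all band projections on X, partially ordered by the usual order of positive operators (P ≤ Q iff Q − P is positive). For any two band projections P and Q on X: the composition PQ is the infimum of {P, Q} within the set of band projections, and P + Q − PQ is the supremum of {P, Q} within the set of band projections; moreover I − P is a band projection satisfying P·(I−P) = 0 and P + (I−P) − P(I−P) = I. (Consequently the band projections on X form a Boolean algebra with smallest element 0, largest element I, lattice operations P ∧ Q = PQ and P ∨ Q = P + Q − PQ, and complement P^c = I − P.) -/

import Mathlib

open Pointwise

variable {X : Type*} [AddCommGroup X] [PartialOrder X] [IsOrderedAddMonoid X] [Module ℝ X]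
    [PosSMulStrictMono ℝ X]

/-- Two elements of an ordered vector space are disjoint if the sets `{x+y, -x-y}` and
`{x-y, y-x}` have the same set of upper bounds. -/
def UDisjoint (x y : X) : Prop :=
  upperBounds ({x + y, -x - y} : Set X) = upperBounds ({x - y, y - x} : Set X)

/-- The disjoint complement `S^⊥` of a set `S`. -/
def dComp (S : Set X) : Set X := {x : X | ∀ s ∈ S, UDisjoint x s}

/-- A band: a set equal to its double disjoint complement. -/
def IsBand (B : Set X) : Prop := B = dComp (dComp B)

/-- A projection band: a band `B` with `B ∩ B^⊥ = {0}` and `B + B^⊥ = X`. -/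
def IsProjBand (B : Set X) : Prop :=
  IsBand B ∧ B ∩ dComp B = {0} ∧ ∀ x : X, ∃ b ∈ B, ∃ c ∈ dComp B, x = b + c

/-- A positive linear operator. -/
def IsPosMap (T : X →ₗ[ℝ] X) : Prop := ∀ x : X, 0 ≤ x → 0 ≤ T x

/-- A band projection: a linear projection whose range is a projection band and whose
kernel is the disjoint complement of the range. -/
def IsBandProj (P : X →ₗ[ℝ] X) : Prop :=
  P ∘ₗ P = P ∧ IsProjBand (Set.range ⇑P) ∧ (LinearMap.ker P : Set X) = dComp (Set.range ⇑P)

/-- A pre-Riesz space: for every nonempty finite `A ⊆ X` and every `x`, if the upper bounds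
of `x + A` are contained in the upper bounds of `A`, then `x ≥ 0`. -/
def IsPreRiesz (X : Type*) [AddCommGroup X] [PartialOrder X] [IsOrderedAddMonoid X] [Module ℝ X]
    [PosSMulStrictMono ℝ X] : Prop :=
  ∀ (A : Set X) (x : X), A.Finite → A.Nonempty →
    upperBounds ((x + ·) '' A) ⊆ upperBounds A → 0 ≤ x

/-! Pre-Riesz spaces are directed, and in a directed ordered vector space the band projections
are exactly the idempotents `P` with `0 ≤ P ≤ I` (order projections). For such `P` the mixing
`(a, b) ↦ P a + (I - P) b` preserves upper bounds, which makes `ker P` disjoint from `range P`;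
conversely `x = (x - P x) + P x` splits `x ≥ 0` into disjoint, hence positive, parts.
Two order projections commute, because for `x ≥ 0` the element `P Q x` lies between `0` and
`Q x` and is therefore fixed by `Q`. So `P Q` is again an order projection, and the largest
one below `P` and `Q`; passing to complements, `P + Q - P Q = I - (I - P)(I - Q)` is the
smallest above both. -/

lemma mem_upperBounds_pair {α : Type*} [Preorder α] {a b w : α} :
    w ∈ upperBounds ({a, b} : Set α) ↔ a ≤ w ∧ b ≤ w := by
  simp [upperBounds_insert]

lemma IsPreRiesz.isDirectedOrder (hX : IsPreRiesz X) : IsDirectedOrder X := by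
  refine ⟨fun a b => ?_⟩
  by_contra! hab
  -- no translate of `{a, b}` has an upper bound, so `hX` makes every element positive
  have hpos (x : X) : 0 ≤ x := by
    refine hX {a, b} x (by simp) (by simp) fun w hw => (hab (w - x) ?_ ?_).elim
    · exact le_sub_iff_add_le'.mpr (hw ⟨a, by simp, rfl⟩)
    · exact le_sub_iff_add_le'.mpr (hw ⟨b, by simp, rfl⟩)
  exact hab 0 (neg_nonneg.mp (hpos _)) (neg_nonneg.mp (hpos _))

lemma nonneg_of_nonneg_add_self {E : Type*} [AddCommGroup E] [PartialOrder E] [Module ℝ E]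
    [PosSMulStrictMono ℝ E] {a : E} (h : 0 ≤ a + a) : 0 ≤ a := by
  rw [← two_smul ℝ a] at h
  exact (smul_nonneg_iff_nonneg_of_pos_left two_pos).mp h

section Disjoint

variable {E : Type*} [AddCommGroup E] [PartialOrder E]

lemma udisjoint_zero_left (s : E) : UDisjoint (0 : E) s := by
  simp only [UDisjoint, zero_add, zero_sub, sub_zero, neg_zero, Set.pair_comm]

variable [IsOrderedAddMonoid E] [Module ℝ E]

lemma UDisjoint.eq_zero_of_self {x : E} (h : UDisjoint x x) : x = 0 := by
  have hmem : (0 : E) ∈ upperBounds ({x - x, x - x} : Set E) := by simp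
  rw [← h, mem_upperBounds_pair, ← neg_add', neg_nonpos] at hmem
  have h2x : (2 : ℝ) • x = 0 := by rw [two_smul]; exact le_antisymm hmem.1 hmem.2
  exact (smul_eq_zero.mp h2x).resolve_left two_ne_zero

variable [PosSMulStrictMono ℝ E]

lemma UDisjoint.nonneg_of_add_nonneg {x y : E} (h : UDisjoint x y) (hxy : 0 ≤ x + y) :
    0 ≤ x ∧ 0 ≤ y := by
  have hmem : x + y ∈ upperBounds ({x + y, -x - y} : Set E) :=
    mem_upperBounds_pair.mpr ⟨le_rfl, by rw [← neg_add']; exact neg_le_self hxy⟩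
  rw [h, mem_upperBounds_pair] at hmem
  constructor <;> apply nonneg_of_nonneg_add_self
  · simpa only [show x + y - (y - x) = x + x by abel] using sub_nonneg.mpr hmem.2
  · simpa only [show x + y - (x - y) = y + y by abel] using sub_nonneg.mpr hmem.1

end Disjoint

section Operators

lemma id_sub_comp_id_sub {R M : Type*} [Ring R] [AddCommGroup M] [Module R M]
    (P Q : M →ₗ[R] M) :
    (LinearMap.id - P) ∘ₗ (LinearMap.id - Q) = LinearMap.id - (P + Q - P ∘ₗ Q) := by
  simp only [LinearMap.sub_comp, LinearMap.comp_sub, LinearMap.id_comp, LinearMap.comp_id]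
  abel

variable {E : Type*} [AddCommGroup E] [PartialOrder E] [Module ℝ E]

lemma IsPosMap.comp {S T : E →ₗ[ℝ] E} (hS : IsPosMap S) (hT : IsPosMap T) :
    IsPosMap (S ∘ₗ T) :=
  fun x hx => hS _ (hT x hx)

structure IsOrderProj (P : E →ₗ[ℝ] E) : Prop where
  idem : P ∘ₗ P = P
  nonneg : IsPosMap P
  nonneg_compl : IsPosMap (LinearMap.id - P)

namespace IsOrderProj

variable {P Q : E →ₗ[ℝ] E}

lemma apply_apply (hP : IsOrderProj P) (x : E) : P (P x) = P x :=
  LinearMap.congr_fun hP.idem x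

lemma compl (hP : IsOrderProj P) : IsOrderProj (LinearMap.id - P) where
  idem := IsIdempotentElem.one_sub hP.idem
  nonneg := hP.nonneg_compl
  nonneg_compl := by simpa using hP.nonneg

end IsOrderProj

lemma isPosMap_sub_comp_left {P Q : E →ₗ[ℝ] E} (hP : IsPosMap P)
    (hQ : IsPosMap (LinearMap.id - Q)) : IsPosMap (P - P ∘ₗ Q) := by
  simpa only [LinearMap.comp_sub, LinearMap.comp_id] using hP.comp hQ

lemma isPosMap_sub_comp_right {P Q : E →ₗ[ℝ] E} (hP : IsPosMap (LinearMap.id - P))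
    (hQ : IsPosMap Q) : IsPosMap (Q - P ∘ₗ Q) := by
  simpa only [LinearMap.sub_comp, LinearMap.id_comp] using hP.comp hQ

variable [IsOrderedAddMonoid E]

lemma ext_of_forall_nonneg [IsDirectedOrder E] {f g : E →ₗ[ℝ] E} (h : ∀ x, 0 ≤ x → f x = g x) :
    f = g := by
  ext x
  obtain ⟨u, hxu, hu⟩ := exists_ge_ge x 0
  calc f x = f u - f (u - x) := by simp
    _ = g u - g (u - x) := by rw [h u hu, h _ (sub_nonneg.mpr hxu)]
    _ = g x := by simp

lemma isPosMap_sub_iff {S T : E →ₗ[ℝ] E} : IsPosMap (T - S) ↔ ∀ x, 0 ≤ x → S x ≤ T x := by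
  simp only [IsPosMap, LinearMap.sub_apply, sub_nonneg]

lemma IsPosMap.mono {T : E →ₗ[ℝ] E} (hT : IsPosMap T) {a b : E} (h : a ≤ b) : T a ≤ T b := by
  simpa using hT (b - a) (sub_nonneg.mpr h)

namespace IsOrderProj

variable {P Q : E →ₗ[ℝ] E}

lemma apply_le (hP : IsOrderProj P) {x : E} (hx : 0 ≤ x) : P x ≤ x := by
  simpa using hP.nonneg_compl x hx

lemma apply_eq_self_of_le (hP : IsOrderProj P) {y z : E} (hy : 0 ≤ y) (hyz : y ≤ P z) :
    P y = y := by
  have h := hP.nonneg_compl.mono hyz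
  simp only [LinearMap.sub_apply, LinearMap.id_apply, hP.apply_apply, sub_self] at h
  exact le_antisymm (hP.apply_le hy) (sub_nonpos.mp h)

lemma add_sub_le (hP : IsOrderProj P) {a b w : E} (ha : a ≤ w) (hb : b ≤ w) :
    P a + (b - P b) ≤ w := by
  have hb' := hP.nonneg_compl.mono hb
  simp only [LinearMap.sub_apply, LinearMap.id_apply] at hb'
  calc P a + (b - P b) ≤ P w + (w - P w) := add_le_add (hP.nonneg.mono ha) hb'
    _ = w := add_sub_cancel _ _

lemma upperBounds_pair_subset (hP : IsOrderProj P) (a b : E) :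
    upperBounds ({a, b} : Set E) ⊆ upperBounds {P b + (a - P a), P a + (b - P b)} := by
  intro w hw
  rw [mem_upperBounds_pair] at hw ⊢
  exact ⟨hP.add_sub_le hw.2 hw.1, hP.add_sub_le hw.1 hw.2⟩

lemma udisjoint_of_apply_eq (hP : IsOrderProj P) {x t : E} (hx : P x = 0) (ht : P t = t) :
    UDisjoint x t := by
  have h₁ := hP.upperBounds_pair_subset (x + t) (-x - t)
  have h₂ := hP.upperBounds_pair_subset (x - t) (t - x)
  -- exchanging the `P`-components of a pair swaps `{x + t, -x - t}` and `{x - t, t - x}`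
  simp only [map_add, map_sub, map_neg, hx, ht] at h₁ h₂
  refine Set.Subset.antisymm ?_ ?_
  · convert h₁ using 2
    exact Set.pair_eq_pair_iff.mpr (.inl ⟨by abel, by abel⟩)
  · convert h₂ using 2
    exact Set.pair_eq_pair_iff.mpr (.inl ⟨by abel, by abel⟩)

lemma apply_eq_zero_of_udisjoint [IsDirectedOrder E] (hP : IsOrderProj P) {x : E}
    (h : UDisjoint x (P x)) : P x = 0 := by
  obtain ⟨u, hu₁, hu₂⟩ := exists_ge_ge (x - P x) (P x - x)
  -- `I - P` fixes `x - P x` and `P x - x`, so `u - P u` is still an upper bound of both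
  have hv : u - P u ∈ upperBounds ({x - P x, P x - x} : Set E) := by
    rw [mem_upperBounds_pair]
    constructor
    · simpa [hP.apply_apply] using hP.nonneg_compl.mono hu₁
    · simpa [hP.apply_apply] using hP.nonneg_compl.mono hu₂
  rw [← h, mem_upperBounds_pair] at hv
  have h₁ := hP.nonneg.mono hv.1
  have h₂ := hP.nonneg.mono hv.2
  simp only [map_add, map_sub, map_neg, hP.apply_apply, sub_self] at h₁ h₂
  have h2x : (2 : ℝ) • P x = 0 := by
    rw [two_smul]
    exact le_antisymm h₁ (by rw [← neg_nonpos, neg_add']; exact h₂)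
  exact (smul_eq_zero.mp h2x).resolve_left two_ne_zero

lemma ker_eq_dComp_range [IsDirectedOrder E] (hP : IsOrderProj P) :
    (LinearMap.ker P : Set E) = dComp (Set.range P) := by
  ext x
  refine ⟨fun hx => ?_, fun h => hP.apply_eq_zero_of_udisjoint (h _ ⟨x, rfl⟩)⟩
  rintro _ ⟨y, rfl⟩
  exact hP.udisjoint_of_apply_eq hx (hP.apply_apply y)

lemma isBandProj [IsDirectedOrder E] (hP : IsOrderProj P) : IsBandProj P := by
  have hker := hP.ker_eq_dComp_range
  have hrange : Set.range P = (LinearMap.ker (LinearMap.id - P) : Set E) := by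
    rw [← LinearMap.coe_range, LinearMap.IsIdempotentElem.range_eq_ker hP.idem]
  have hrange' : Set.range ⇑(LinearMap.id - P : E →ₗ[ℝ] E) = (LinearMap.ker P : Set E) := by
    rw [← LinearMap.coe_range, LinearMap.IsIdempotentElem.ker_eq_range hP.idem]
  refine ⟨hP.idem, ⟨?_, ?_, fun x => ⟨P x, ⟨x, rfl⟩, x - P x, ?_, by abel⟩⟩, hker⟩
  · rw [IsBand, ← hker, ← hrange', ← hP.compl.ker_eq_dComp_range, hrange]
  · refine Set.eq_singleton_iff_unique_mem.mpr ⟨⟨⟨0, map_zero P⟩, fun s _ => ?_⟩, ?_⟩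
    · exact udisjoint_zero_left s
    · exact fun t ⟨ht, htd⟩ => (htd t ht).eq_zero_of_self
  · rw [← hker]
    simp [hP.apply_apply]

lemma comp_apply_le (hP : IsOrderProj P) (hQ : IsOrderProj Q) {x : E} (hx : 0 ≤ x) :
    P (Q x) ≤ Q (P x) := by
  have hQx := hQ.nonneg x hx
  calc P (Q x) = Q (P (Q x)) :=
        (hQ.apply_eq_self_of_le (hP.nonneg _ hQx) (hP.apply_le hQx)).symm
    _ ≤ Q (P x) := hQ.nonneg.mono (hP.nonneg.mono (hQ.apply_le hx))

lemma commute [IsDirectedOrder E] (hP : IsOrderProj P) (hQ : IsOrderProj Q) :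
    P ∘ₗ Q = Q ∘ₗ P :=
  ext_of_forall_nonneg fun _ hx => le_antisymm (hP.comp_apply_le hQ hx) (hQ.comp_apply_le hP hx)

lemma comp [IsDirectedOrder E] (hP : IsOrderProj P) (hQ : IsOrderProj Q) :
    IsOrderProj (P ∘ₗ Q) where
  idem := IsIdempotentElem.mul_of_commute (hP.commute hQ) hP.idem hQ.idem
  nonneg := hP.nonneg.comp hQ.nonneg
  nonneg_compl := by
    rw [isPosMap_sub_iff]
    exact fun x hx => (hP.nonneg.mono (hQ.apply_le hx)).trans (hP.apply_le hx)

lemma le_comp_of_le (hP : IsOrderProj P) {R : E →ₗ[ℝ] E} (hR : IsPosMap R)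
    (hRP : IsPosMap (P - R)) (hRQ : IsPosMap (Q - R)) : IsPosMap (P ∘ₗ Q - R) := by
  rw [isPosMap_sub_iff] at hRP hRQ ⊢
  intro x hx
  calc R x = P (R x) := (hP.apply_eq_self_of_le (hR x hx) (hRP x hx)).symm
    _ ≤ P (Q x) := hP.nonneg.mono (hRQ x hx)

lemma add_sub_comp [IsDirectedOrder E] (hP : IsOrderProj P) (hQ : IsOrderProj Q) :
    IsOrderProj (P + Q - P ∘ₗ Q) := by
  simpa only [id_sub_comp_id_sub, sub_sub_cancel] using (hP.compl.comp hQ.compl).compl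

lemma add_sub_comp_le_of_le (hP : IsOrderProj P) {R : E →ₗ[ℝ] E}
    (hR : IsPosMap (LinearMap.id - R)) (hPR : IsPosMap (R - P)) (hQR : IsPosMap (R - Q)) :
    IsPosMap (R - (P + Q - P ∘ₗ Q)) := by
  have h := hP.compl.le_comp_of_le (Q := LinearMap.id - Q) hR
    (by rwa [sub_sub_sub_cancel_left]) (by rwa [sub_sub_sub_cancel_left])
  rwa [id_sub_comp_id_sub, sub_sub_sub_cancel_left] at h

end IsOrderProj

lemma IsBandProj.isOrderProj [PosSMulStrictMono ℝ E] {P : E →ₗ[ℝ] E} (hP : IsBandProj P) :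
    IsOrderProj P := by
  have key (x : E) (hx : 0 ≤ x) : 0 ≤ x - P x ∧ 0 ≤ P x := by
    have hker : x - P x ∈ dComp (Set.range P) := by
      rw [← hP.2.2, SetLike.mem_coe, LinearMap.mem_ker, map_sub, ← LinearMap.comp_apply, hP.1,
        sub_self]
    exact (hker _ ⟨x, rfl⟩).nonneg_of_add_nonneg (by rwa [sub_add_cancel])
  exact ⟨hP.1, fun x hx => (key x hx).2, fun x hx => by simpa using (key x hx).1⟩

end Operators

/-- The band projections on `X` form a Boolean algebra: `PQ` is the infimum and
`P + Q - PQ` the supremum of `{P, Q}` among band projections, and `I - P` is a band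
projection complementary to `P`. -/
theorem stmt_7 (hX : IsPreRiesz X) (P Q : X →ₗ[ℝ] X)
    (hP : IsBandProj P) (hQ : IsBandProj Q) :
    IsBandProj (P ∘ₗ Q) ∧
    IsPosMap (P - P ∘ₗ Q) ∧ IsPosMap (Q - P ∘ₗ Q) ∧
    (∀ R : X →ₗ[ℝ] X, IsBandProj R → IsPosMap (P - R) → IsPosMap (Q - R) →
      IsPosMap (P ∘ₗ Q - R)) ∧
    IsBandProj (P + Q - P ∘ₗ Q) ∧
    IsPosMap (P + Q - P ∘ₗ Q - P) ∧ IsPosMap (P + Q - P ∘ₗ Q - Q) ∧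
    (∀ R : X →ₗ[ℝ] X, IsBandProj R → IsPosMap (R - P) → IsPosMap (R - Q) →
      IsPosMap (R - (P + Q - P ∘ₗ Q))) ∧
    IsBandProj ((LinearMap.id : X →ₗ[ℝ] X) - P) ∧
    P ∘ₗ ((LinearMap.id : X →ₗ[ℝ] X) - P) = 0 ∧
    P + ((LinearMap.id : X →ₗ[ℝ] X) - P) - P ∘ₗ ((LinearMap.id : X →ₗ[ℝ] X) - P)
      = (LinearMap.id : X →ₗ[ℝ] X) := by
  have := hX.isDirectedOrder
  have hP' := hP.isOrderProj
  have hQ' := hQ.isOrderProj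
  have hPQ_le_P := isPosMap_sub_comp_left hP'.nonneg hQ'.nonneg_compl
  have hPQ_le_Q := isPosMap_sub_comp_right hP'.nonneg_compl hQ'.nonneg
  have hP_compl : P ∘ₗ (LinearMap.id - P) = 0 := by
    rw [LinearMap.comp_sub, LinearMap.comp_id, hP'.idem, sub_self]
  refine ⟨(hP'.comp hQ').isBandProj, hPQ_le_P, hPQ_le_Q,
    fun R hR => hP'.le_comp_of_le hR.isOrderProj.nonneg, (hP'.add_sub_comp hQ').isBandProj,
    by convert hPQ_le_Q using 1; abel, by convert hPQ_le_P using 1; abel,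
    fun R hR => hP'.add_sub_comp_le_of_le hR.isOrderProj.nonneg_compl, hP'.compl.isBandProj,
    hP_compl, by rw [hP_compl, sub_zero, add_sub_cancel]⟩
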